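/- Let G be a finite simple graph that has at least one edge and is not a complete graph, and let ζ be a surprise-optimal clustering of G. Then every cluster of ζ induces a connected subgraph of G. -/

import Mathlib

/-!
Splitting a cluster `P` into two nonempty parts `A` and `P \ A` with no edge between them keeps
the number `i_e` of intracluster edges and lowers the number `i_p` of intracluster pairs by
`|A| |P \ A|`. For fixed `i_e ≥ 1` the surprise is strictly increasing in `i_p`: the tail
`∑_{i ≥ i_e} C(k, i) C(p - k, m - i)` grows by `C(k, i_e - 1) C(p - k - 1, m - i_e)` when `k`
increases by one. Finally an optimal clustering has `i_e ≥ 1`, since `i_e = 0` gives surprise `1`,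
whereas making a single edge the only non-singleton cluster gives surprise
`C(p - 1, m - 1) / C(p, m) < 1` because `m < p`.
-/

open Finset

/-- The surprise value `S(p, m, i_p, i_e)`. -/
def surpriseVal (p m ip ie : ℕ) : ℚ :=
  (∑ i ∈ Finset.Icc ie m, (ip.choose i * (p - ip).choose (m - i) : ℚ)) / (p.choose m)

variable {V : Type*} [Fintype V] [DecidableEq V]

open scoped Classical in
/-- The number of edges of `G`. -/
noncomputable def numEdges (G : SimpleGraph V) : ℕ := G.edgeFinset.card

open scoped Classical in
/-- The number of intracluster edges of the clustering `ζ`, i.e. of edges of `G`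
having both endpoints in the same cluster. -/
noncomputable def intraEdges (G : SimpleGraph V) (ζ : Finpartition (univ : Finset V)) : ℕ :=
  (G.edgeFinset.filter fun e => ∃ P ∈ ζ.parts, ∀ v ∈ e, v ∈ P).card

open scoped Classical in
/-- The number of intercluster edges of the clustering `ζ`, i.e. of edges of `G`
whose endpoints lie in different clusters. -/
noncomputable def interEdges (G : SimpleGraph V) (ζ : Finpartition (univ : Finset V)) : ℕ :=
  (G.edgeFinset.filter fun e => ¬ ∃ P ∈ ζ.parts, ∀ v ∈ e, v ∈ P).card

/-- The number of intracluster vertex pairs of the clustering `ζ`. -/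
def intraPairs (ζ : Finpartition (univ : Finset V)) : ℕ :=
  ∑ P ∈ ζ.parts, (P.card).choose 2

/-- The surprise of the clustering `ζ` of the graph `G`. -/
noncomputable def surprise (G : SimpleGraph V) (ζ : Finpartition (univ : Finset V)) : ℚ :=
  surpriseVal ((Fintype.card V).choose 2) (numEdges G) (intraPairs ζ) (intraEdges G ζ)

lemma sum_Icc_eq_sum_antidiagonal {M : Type*} [AddCommMonoid M] (f : ℕ → ℕ → M) {s m : ℕ}
    (hsm : s ≤ m) :
    ∑ i ∈ Icc s m, f i (m - i) = ∑ ij ∈ antidiagonal (m - s), f (s + ij.1) ij.2 := by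
  rw [Nat.sum_antidiagonal_eq_sum_range_succ (fun i j => f (s + i) j),
    ← Ico_add_one_right_eq_Icc, sum_Ico_eq_sum_range]
  refine sum_congr (by congr 1; omega) fun i _ => ?_
  congr 1
  omega

lemma sum_antidiagonal_choose_succ_succ (k q s N : ℕ) :
    ∑ ij ∈ antidiagonal N, (k + 1).choose (s + 1 + ij.1) * q.choose ij.2 =
      ∑ ij ∈ antidiagonal N, k.choose (s + 1 + ij.1) * (q + 1).choose ij.2
        + k.choose s * q.choose N := by
  cases N with
  | zero => simp [Nat.choose_succ_succ', add_comm]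
  | succ n =>
    have hk (i : ℕ) : (k + 1).choose (s + 1 + i) = k.choose (s + i) + k.choose (s + 1 + i) := by
      rw [add_right_comm, Nat.choose_succ_succ', add_right_comm]
    simp only [hk, add_mul, sum_add_distrib]
    rw [Nat.sum_antidiagonal_succ, Nat.sum_antidiagonal_succ', Nat.sum_antidiagonal_succ']
    simp only [Nat.choose_succ_succ', Nat.choose_zero_right, mul_add, sum_add_distrib]
    ring_nf

lemma Nat.choose_two_add (a b : ℕ) : (a + b).choose 2 = a.choose 2 + b.choose 2 + a * b := by
  qify
  simp only [Nat.cast_choose_two, Nat.cast_add]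
  ring

lemma Finset.card_sym2_filter_not_isDiag {α : Type*} [DecidableEq α] (s : Finset α) :
    #{e ∈ s.sym2 | ¬ e.IsDiag} = (#s).choose 2 := by
  rw [← Sym2.card_image_offDiag, ← Sym2.filter_image_mk_not_isDiag, ← sym2_eq_image]

section SurpriseValue

def surpriseNum (p m k ie : ℕ) : ℕ := ∑ i ∈ Icc ie m, k.choose i * (p - k).choose (m - i)

lemma surpriseVal_eq_surpriseNum_div (p m k ie : ℕ) :
    surpriseVal p m k ie = surpriseNum p m k ie / p.choose m := by
  simp [surpriseVal, surpriseNum]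

lemma surpriseNum_zero {p m k : ℕ} (hkp : k ≤ p) : surpriseNum p m k 0 = p.choose m := by
  rw [surpriseNum, sum_Icc_eq_sum_antidiagonal (fun i j => k.choose i * (p - k).choose j)
    m.zero_le, Nat.sub_zero]
  simp only [zero_add]
  rw [← Nat.add_choose_eq, Nat.add_sub_cancel' hkp]

lemma surpriseNum_zero_eq_add_one (p m k : ℕ) :
    surpriseNum p m k 0 = (p - k).choose m + surpriseNum p m k 1 := by
  rw [surpriseNum, ← insert_Icc_add_one_left_eq_Icc m.zero_le, sum_insert (by simp)]
  simp [surpriseNum]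

lemma surpriseNum_succ {p m k s : ℕ} (hkp : k < p) (hsm : s + 1 ≤ m) :
    surpriseNum p m (k + 1) (s + 1) =
      surpriseNum p m k (s + 1) + k.choose s * (p - (k + 1)).choose (m - (s + 1)) := by
  have hp : p - k = p - (k + 1) + 1 := by omega
  rw [surpriseNum, surpriseNum, hp,
    sum_Icc_eq_sum_antidiagonal (fun i j => (k + 1).choose i * (p - (k + 1)).choose j) hsm,
    sum_Icc_eq_sum_antidiagonal (fun i j => k.choose i * (p - (k + 1) + 1).choose j) hsm]
  exact sum_antidiagonal_choose_succ_succ k _ s _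

lemma surpriseNum_monotoneOn {p m ie : ℕ} (hie : 1 ≤ ie) (hiem : ie ≤ m) :
    MonotoneOn (surpriseNum p m · ie) (Set.Iic p) := by
  obtain ⟨s, rfl⟩ := Nat.exists_eq_add_of_le' hie
  refine monotoneOn_of_le_add_one Set.ordConnected_Iic fun k _ _ hk => ?_
  rw [surpriseNum_succ (by simpa using hk) hiem]
  exact Nat.le_add_right _ _

lemma surpriseNum_lt_surpriseNum {p m ie a b : ℕ} (hie : 1 ≤ ie) (hiem : ie ≤ m) (hia : ie ≤ a)
    (hab : a < b) (hbp : b ≤ p) (hmb : m - ie ≤ p - b) :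
    surpriseNum p m a ie < surpriseNum p m b ie := by
  obtain ⟨s, rfl⟩ := Nat.exists_eq_add_of_le' hie
  obtain ⟨k, rfl⟩ : ∃ k, b = k + 1 := ⟨b - 1, by omega⟩
  have hle : surpriseNum p m a (s + 1) ≤ surpriseNum p m k (s + 1) :=
    surpriseNum_monotoneOn hie hiem (by simp; omega) (by simp; omega) (by omega)
  have hpos : 0 < k.choose s * (p - (k + 1)).choose (m - (s + 1)) :=
    Nat.mul_pos (Nat.choose_pos (by omega)) (Nat.choose_pos hmb)
  rw [surpriseNum_succ (by omega) hiem]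
  omega

lemma surpriseVal_lt_surpriseVal {p m ie a b : ℕ} (hie : 1 ≤ ie) (hiem : ie ≤ m) (hia : ie ≤ a)
    (hab : a < b) (hbp : b ≤ p) (hmb : m - ie ≤ p - b) :
    surpriseVal p m a ie < surpriseVal p m b ie := by
  have hpm : (0 : ℚ) < p.choose m := by exact_mod_cast Nat.choose_pos (by omega)
  simp only [surpriseVal_eq_surpriseNum_div]
  gcongr
  exact surpriseNum_lt_surpriseNum hie hiem hia hab hbp hmb

lemma surpriseVal_zero {p m k : ℕ} (hmp : m ≤ p) (hkp : k ≤ p) : surpriseVal p m k 0 = 1 := by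
  have hpm : (p.choose m : ℚ) ≠ 0 := by exact_mod_cast (Nat.choose_pos hmp).ne'
  rw [surpriseVal_eq_surpriseNum_div, surpriseNum_zero hkp, div_self hpm]

lemma surpriseVal_one_one_lt_one {p m : ℕ} (hmp : m < p) : surpriseVal p m 1 1 < 1 := by
  have hpm : (0 : ℚ) < p.choose m := by exact_mod_cast Nat.choose_pos hmp.le
  have h := surpriseNum_zero_eq_add_one p m 1
  rw [surpriseNum_zero (by omega)] at h
  have hpos : 0 < (p - 1).choose m := Nat.choose_pos (by omega)
  rw [surpriseVal_eq_surpriseNum_div, div_lt_one hpm]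
  exact_mod_cast (by omega : surpriseNum p m 1 1 < p.choose m)

end SurpriseValue

namespace Finpartition

section Modular

variable {α : Type*} [Lattice α] [OrderBot α] [IsModularLattice α] [DecidableEq α] {a b c : α}

lemma sum_extend {M : Type*} [AddCommMonoid M] (P : Finpartition a) (hb : b ≠ ⊥)
    (hab : Disjoint a b) (hc : a ⊔ b = c) (f : α → M) :
    ∑ x ∈ (P.extend hb hab hc).parts, f x = f b + ∑ x ∈ P.parts, f x :=
  sum_insert fun h => hb <| hab.symm.eq_bot_of_le <| P.le h

end Modular

section BooleanAlgebra

variable {α : Type*} [GeneralizedBooleanAlgebra α] [DecidableEq α] {s P A : α}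

lemma sup_parts_erase (ζ : Finpartition s) (hP : P ∈ ζ.parts) :
    (ζ.parts.erase P).sup id = s \ P := by
  have hdisj : Disjoint P ((ζ.parts.erase P).sup id) :=
    ζ.supIndep (erase_subset P _) hP (notMem_erase P _)
  conv_rhs => rw [← ζ.sup_parts, ← insert_erase hP, sup_insert, id, hdisj.sup_sdiff_cancel_left]

def splitPart (ζ : Finpartition s) (hP : P ∈ ζ.parts) (hAP : A ≤ P) (hA : A ≠ ⊥)
    (hPA : P \ A ≠ ⊥) : Finpartition s :=
  ((ζ.ofSubset (erase_subset P _) (sup_parts_erase ζ hP)).extend hA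
    (disjoint_sdiff_self_left.mono_right hAP) rfl).extend hPA
    ((disjoint_sdiff_self_left.mono_right sdiff_le).sup_left disjoint_sdiff_self_right)
    (by rw [sup_assoc, sup_sdiff_cancel_right hAP, sdiff_sup_cancel (ζ.le hP)])

lemma sum_splitPart {M : Type*} [AddCommMonoid M] (ζ : Finpartition s) (hP : P ∈ ζ.parts)
    (hAP : A ≤ P) (hA : A ≠ ⊥) (hPA : P \ A ≠ ⊥) (f : α → M) :
    ∑ x ∈ (ζ.splitPart hP hAP hA hPA).parts, f x + f P =
      ∑ x ∈ ζ.parts, f x + f A + f (P \ A) := by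
  rw [splitPart, sum_extend, sum_extend, ofSubset_parts, ← sum_erase_add _ _ hP]
  abel

end BooleanAlgebra

end Finpartition

namespace SimpleGraph

variable {W : Type*} (H : SimpleGraph W)

lemma exists_cut_of_not_preconnected_induce {P : Set W} (h : ¬ (H.induce P).Preconnected) :
    ∃ A ⊆ P, A.Nonempty ∧ (P \ A).Nonempty ∧ ∀ a ∈ A, ∀ b ∈ P \ A, ¬ H.Adj a b := by
  simp only [Preconnected, not_forall] at h
  obtain ⟨u, w, huw⟩ := h
  refine ⟨Subtype.val '' {v | (H.induce P).Reachable u v}, by simp, ⟨u, u, .rfl, rfl⟩,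
    ⟨w, w.2, ?_⟩, ?_⟩
  · rintro ⟨w', hw', hww'⟩
    exact huw (by rwa [← Subtype.ext hww'])
  · rintro _ ⟨a, ha, rfl⟩ b ⟨hb, hbA⟩ hab
    exact hbA ⟨⟨b, hb⟩, ha.trans (Adj.reachable hab), rfl⟩

variable [DecidableEq W] [Fintype H.edgeSet]

lemma card_edgeFinset_inter_sym2_of_forall_not_adj {P A : Finset W} (hAP : A ⊆ P)
    (hcut : ∀ a ∈ A, ∀ b ∈ P \ A, ¬ H.Adj a b) :
    #(H.edgeFinset ∩ P.sym2) = #(H.edgeFinset ∩ A.sym2) + #(H.edgeFinset ∩ (P \ A).sym2) := by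
  rw [← card_union_of_disjoint]
  · congr 1
    ext e
    induction e with
    | _ u w =>
      simp only [mem_inter, mem_edgeFinset, mem_edgeSet, mk_mem_sym2_iff, mem_union, mem_sdiff]
      grind [H.adj_symm]
  · refine Finset.disjoint_left.2 fun e heA heB => ?_
    induction e with
    | _ u w => simp_all

end SimpleGraph

section Clustering

open scoped Classical

variable (ζ : Finpartition (univ : Finset V))

lemma intraEdges_eq_sum_card_inter_sym2 (H : SimpleGraph V) :
    intraEdges H ζ = ∑ P ∈ ζ.parts, #(H.edgeFinset ∩ P.sym2) := by
  rw [intraEdges, ← card_biUnion]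
  · congr 1
    ext e
    simp only [mem_filter, mem_biUnion, mem_inter, mem_sym2_iff]
    tauto
  · intro P hP Q hQ hPQ
    rw [Function.onFun, disjoint_left]
    intro e heP heQ
    induction e with
    | _ u w =>
      exact hPQ (ζ.eq_of_mem_parts hP hQ (mk_mem_sym2_iff.1 (mem_inter.1 heP).2).1
        (mk_mem_sym2_iff.1 (mem_inter.1 heQ).2).1)

lemma intraPairs_eq_intraEdges_top : intraPairs ζ = intraEdges ⊤ ζ := by
  rw [intraPairs, intraEdges_eq_sum_card_inter_sym2]
  refine sum_congr rfl fun P _ => ?_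
  rw [← card_sym2_filter_not_isDiag]
  congr 1
  ext e
  simp [and_comm]

lemma intraEdges_add_interEdges (H : SimpleGraph V) :
    intraEdges H ζ + interEdges H ζ = numEdges H :=
  card_filter_add_card_filter_not _

lemma numEdges_top : numEdges (⊤ : SimpleGraph V) = (Fintype.card V).choose 2 := by
  rw [numEdges]
  convert SimpleGraph.card_edgeFinset_top_eq_card_choose_two (V := V)

lemma numEdges_lt {G : SimpleGraph V} (hG : G ≠ ⊤) : numEdges G < (Fintype.card V).choose 2 := by
  rw [← numEdges_top, numEdges, numEdges]
  convert card_lt_card (SimpleGraph.edgeFinset_ssubset_edgeFinset.2 (lt_top_iff_ne_top.2 hG))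

variable {ζ} in
lemma intraEdges_mono {H H' : SimpleGraph V} (h : H ≤ H') : intraEdges H ζ ≤ intraEdges H' ζ :=
  card_le_card (filter_subset_filter _ (SimpleGraph.edgeFinset_mono h))

variable {ζ} in
lemma interEdges_mono {H H' : SimpleGraph V} (h : H ≤ H') : interEdges H ζ ≤ interEdges H' ζ :=
  card_le_card (filter_subset_filter _ (SimpleGraph.edgeFinset_mono h))

lemma intraEdges_le_intraPairs (G : SimpleGraph V) : intraEdges G ζ ≤ intraPairs ζ :=
  intraPairs_eq_intraEdges_top ζ ▸ intraEdges_mono le_top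

lemma intraPairs_le : intraPairs ζ ≤ (Fintype.card V).choose 2 := by
  have := intraEdges_add_interEdges ζ ⊤
  rw [numEdges_top, ← intraPairs_eq_intraEdges_top] at this
  omega

lemma numEdges_sub_intraEdges_le (G : SimpleGraph V) :
    numEdges G - intraEdges G ζ ≤ (Fintype.card V).choose 2 - intraPairs ζ := by
  have hG := intraEdges_add_interEdges ζ G
  have htop := intraEdges_add_interEdges ζ ⊤
  have hmono : interEdges G ζ ≤ interEdges ⊤ ζ := interEdges_mono le_top
  rw [numEdges_top, ← intraPairs_eq_intraEdges_top] at htop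
  omega

lemma exists_intraPairs_eq_one (G : SimpleGraph V) {a b : V} (hab : G.Adj a b) :
    ∃ ζ₀ : Finpartition (univ : Finset V), intraPairs ζ₀ = 1 ∧ intraEdges G ζ₀ = 1 := by
  let ζ₀ := (⊥ : Finpartition (univ \ {a, b})).extend (insert_nonempty a {b}).ne_empty
    disjoint_sdiff_self_left (sdiff_sup_cancel (subset_univ _))
  have hpairs : intraPairs ζ₀ = 1 := by
    rw [intraPairs, Finpartition.sum_extend, card_pair hab.ne, Finpartition.parts_bot, sum_map]
    simp
  refine ⟨ζ₀, hpairs, le_antisymm (hpairs ▸ intraEdges_le_intraPairs ζ₀ G) ?_⟩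
  refine card_pos.2 ⟨s(a, b), mem_filter.2 ⟨G.mem_edgeFinset.2 hab, {a, b}, ?_, ?_⟩⟩ <;> simp [ζ₀]

variable {ζ}

lemma intraEdges_splitPart (G : SimpleGraph V) {P A : Finset V} (hP : P ∈ ζ.parts) (hAP : A ⊆ P)
    (hA : A.Nonempty) (hPA : (P \ A).Nonempty) (hcut : ∀ a ∈ A, ∀ b ∈ P \ A, ¬ G.Adj a b) :
    intraEdges G (ζ.splitPart hP hAP hA.ne_empty hPA.ne_empty) = intraEdges G ζ := by
  have h := ζ.sum_splitPart hP hAP hA.ne_empty hPA.ne_empty fun Q => #(G.edgeFinset ∩ Q.sym2)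
  rw [G.card_edgeFinset_inter_sym2_of_forall_not_adj hAP hcut] at h
  rw [intraEdges_eq_sum_card_inter_sym2, intraEdges_eq_sum_card_inter_sym2]
  omega

lemma intraPairs_splitPart {P A : Finset V} (hP : P ∈ ζ.parts) (hAP : A ⊆ P)
    (hA : A.Nonempty) (hPA : (P \ A).Nonempty) :
    intraPairs (ζ.splitPart hP hAP hA.ne_empty hPA.ne_empty) + #A * #(P \ A) = intraPairs ζ := by
  have h := ζ.sum_splitPart hP hAP hA.ne_empty hPA.ne_empty fun Q => (#Q).choose 2
  rw [← card_sdiff_add_card_eq_card hAP, Nat.choose_two_add] at h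
  rw [intraPairs, intraPairs]
  linarith

lemma surprise_eq_one_of_intraEdges_eq_zero (G : SimpleGraph V) (h : intraEdges G ζ = 0) :
    surprise G ζ = 1 := by
  have hm := numEdges_sub_intraEdges_le ζ G
  have hp := intraPairs_le ζ
  rw [surprise, h]
  exact surpriseVal_zero (by omega) hp

lemma exists_surprise_lt_one {G : SimpleGraph V} (hE : G.edgeSet.Nonempty) (hG : G ≠ ⊤) :
    ∃ ζ₀ : Finpartition (univ : Finset V), surprise G ζ₀ < 1 := by
  obtain ⟨e, he⟩ := hE
  induction e with
  | _ a b =>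
    obtain ⟨ζ₀, hpairs, hedges⟩ := exists_intraPairs_eq_one G he
    exact ⟨ζ₀, by rw [surprise, hpairs, hedges]; exact surpriseVal_one_one_lt_one (numEdges_lt hG)⟩

lemma one_le_intraEdges_of_forall_surprise_le {G : SimpleGraph V} (hE : G.edgeSet.Nonempty)
    (hG : G ≠ ⊤) (hopt : ∀ ζ', surprise G ζ ≤ surprise G ζ') : 1 ≤ intraEdges G ζ := by
  obtain ⟨ζ₀, h₀⟩ := exists_surprise_lt_one hE hG
  by_contra h
  have := surprise_eq_one_of_intraEdges_eq_zero G (by omega : intraEdges G ζ = 0)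
  linarith [hopt ζ₀]

lemma surprise_lt_of_intraPairs_lt {G : SimpleGraph V} {ζ' : Finpartition (univ : Finset V)}
    (hie : intraEdges G ζ' = intraEdges G ζ) (hpos : 1 ≤ intraEdges G ζ)
    (hlt : intraPairs ζ' < intraPairs ζ) : surprise G ζ' < surprise G ζ := by
  rw [surprise, surprise, hie]
  exact surpriseVal_lt_surpriseVal hpos (Nat.le.intro (intraEdges_add_interEdges ζ G))
    (hie ▸ intraEdges_le_intraPairs ζ' G) hlt (intraPairs_le ζ) (numEdges_sub_intraEdges_le ζ G)

end Clustering

/-- Every cluster of a surprise-optimal clustering of a graph with at least one edge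
that is not complete induces a connected subgraph. -/
theorem stmt10 (G : SimpleGraph V) (hE : G.edgeSet.Nonempty) (hnc : G ≠ ⊤)
    (ζ : Finpartition (univ : Finset V))
    (hopt : ∀ ζ' : Finpartition (univ : Finset V), surprise G ζ ≤ surprise G ζ') :
    ∀ P ∈ ζ.parts, (G.induce (P : Set V)).Connected := by
  intro P hP
  by_contra hconn
  have hpre : ¬ (G.induce (P : Set V)).Preconnected := fun h =>
    hconn ((SimpleGraph.connected_iff _).2 ⟨h, (ζ.nonempty_of_mem_parts hP).coe_sort⟩)
  obtain ⟨A, hAP, hA, hPA, hcut⟩ := G.exists_cut_of_not_preconnected_induce hpre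
  lift A to Finset V using P.finite_toSet.subset hAP
  rw [← coe_sdiff] at hPA hcut
  simp only [coe_subset, coe_nonempty, mem_coe] at hAP hA hPA hcut
  have hsplit := intraPairs_splitPart hP hAP hA hPA
  have hcross : 0 < #A * #(P \ A) := Nat.mul_pos hA.card_pos hPA.card_pos
  exact (hopt _).not_gt <| surprise_lt_of_intraPairs_lt (intraEdges_splitPart G hP hAP hA hPA hcut)
    (one_le_intraEdges_of_forall_surprise_le hE hnc hopt) (by omega)
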